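/- arXiv:1912.09266 — 2 statements merged into one kernel-verified Lean document; each statement's English description precedes it below -/
import Mathlib

section
/- (Saito's criterion, direction 3 ⇒ 1) Let (𝒜, m) be a multiarrangement in 𝕂^l and δ₁,…,δ_l ∈ D(𝒜, m) homogeneous derivations. If δ₁,…,δ_l are linearly independent over S and ∑_{i=1}^l pdeg(δ_i) = |m| = ∑_i m(H_i), then δ₁,…,δ_l form a free S-basis of D(𝒜, m). -/
open MvPolynomial

variable {l n : ℕ}

/-- The value of the derivation with coefficient vector `f` on the polynomial `a`. -/
noncomputable def derApp {R : Type*} [CommRing R] (a : MvPolynomial (Fin l) R) :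
    (Fin l → MvPolynomial (Fin l) R) →ₗ[MvPolynomial (Fin l) R] MvPolynomial (Fin l) R where
  toFun f := ∑ j, f j * pderiv j a
  map_add' f g := by simp [add_mul, Finset.sum_add_distrib]
  map_smul' c f := by simp [Finset.mul_sum, smul_eq_mul, mul_assoc]

/-- The module `D(𝒜,m)` of logarithmic derivations of the multiarrangement. -/
noncomputable def logDer {R : Type*} [CommRing R] (α : Fin n → MvPolynomial (Fin l) R)
    (m : Fin n → ℕ) : Submodule (MvPolynomial (Fin l) R) (Fin l → MvPolynomial (Fin l) R) :=
  ⨅ i, Submodule.comap (derApp (α i)) (Ideal.span {α i ^ m i})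

/-- `(𝒜,m)` is free with exponents `e`. -/
noncomputable def freeWithExp {R : Type*} [CommRing R] (α : Fin n → MvPolynomial (Fin l) R)
    (m : Fin n → ℕ) (e : Fin l → ℕ) : Prop :=
  ∃ b : Module.Basis (Fin l) (MvPolynomial (Fin l) R) (logDer α m),
    ∀ i j, ((b i : Fin l → MvPolynomial (Fin l) R) j).IsHomogeneous (e i)

/-- The submodule `M(𝒜,m) ⊆ S^n`. -/
noncomputable def Mmod {R : Type*} [CommRing R] (α : Fin n → MvPolynomial (Fin l) R)
    (m : Fin n → ℕ) : Submodule (MvPolynomial (Fin l) R) (Fin n → MvPolynomial (Fin l) R) :=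
  Submodule.span _ (Set.range fun i => Pi.single i (α i ^ m i))

/-- Multiplication by the Jacobian matrix `(∂α_i/∂x_j)`. -/
noncomputable def jacMap {R : Type*} [CommRing R] (α : Fin n → MvPolynomial (Fin l) R) :
    (Fin l → MvPolynomial (Fin l) R) →ₗ[MvPolynomial (Fin l) R]
      (Fin n → MvPolynomial (Fin l) R) :=
  LinearMap.pi (fun i => derApp (α i))

/-- The map `φ : S^l → S^n / M(𝒜,m)`. -/
noncomputable def phiMap {R : Type*} [CommRing R] (α : Fin n → MvPolynomial (Fin l) R)
    (m : Fin n → ℕ) :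
    (Fin l → MvPolynomial (Fin l) R) →ₗ[MvPolynomial (Fin l) R]
      ((Fin n → MvPolynomial (Fin l) R) ⧸ Mmod α m) :=
  (Mmod α m).mkQ.comp (jacMap α)

/-!
A matrix whose rows lie in `D(𝒜,m)` has determinant divisible by `α_H ^ m_H` for every `H`:
`derApp α_H` applied to the rows is the matrix times the constant vector `(∂α_H/∂x_j)_j`,
one of whose entries is a unit, so a column operation shows `α_H ^ m_H ∣ det`. The `α_H` are
pairwise non-associate primes, hence `Q = ∏ α_H ^ m_H` divides the determinant. For the matrix
of `δ₁,…,δ_l` the determinant is nonzero (linear independence) and homogeneous of degree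
`∑ pdeg δ_i = |m| = deg Q`, so it is a nonzero scalar multiple of `Q`. For `θ ∈ D(𝒜,m)`,
Cramer's rule expresses `θ = ∑ g_i δ_i` with `g_i = det(δ with δ_i replaced by θ) / det`,
which are polynomials since the numerators are divisible by `Q`.
-/

open MvPolynomial

namespace Matrix

variable {ι R : Type*} [Fintype ι] [DecidableEq ι] [CommRing R]

theorem dvd_det_of_dvd_mulVec (N : Matrix ι ι R) {v : ι → R} {j : ι} (hv : IsUnit (v j))
    {a : R} (h : ∀ i, a ∣ (N *ᵥ v) i) : a ∣ N.det := by
  choose g hg using h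
  have hcol : (fun k => ∑ i, v i • N k i) = a • g := by
    funext k
    rw [Pi.smul_apply, smul_eq_mul, ← hg k]
    exact Finset.sum_congr rfl fun i _ => mul_comm _ _
  have key : v j * N.det = a * (N.updateCol j g).det := by
    rw [← smul_eq_mul, ← det_updateCol_sum, hcol, det_updateCol_smul]
  exact hv.dvd_mul_left.mp (key ▸ dvd_mul_right a _)

variable [IsDomain R]

theorem det_ne_zero_of_linearIndependent_rows {M : Matrix ι ι R}
    (hM : LinearIndependent R M) : M.det ≠ 0 := by
  intro h
  obtain ⟨v, hv0, hv⟩ := exists_vecMul_eq_zero_iff.2 h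
  rw [vecMul_eq_sum] at hv
  exact hv0 (funext (Fintype.linearIndependent_iff.1 hM v hv))

/-- Cramer's rule over a domain: the solution is integral when `det M` divides the numerators. -/
theorem exists_vecMul_eq_of_dvd_det_updateRow (M : Matrix ι ι R) (hM : M.det ≠ 0)
    (θ : ι → R) (h : ∀ i, M.det ∣ (M.updateRow i θ).det) : ∃ g, g ᵥ* M = θ := by
  choose g hg using h
  refine ⟨g, funext fun j => mul_left_cancel₀ hM ?_⟩
  have hcr : Mᵀ.cramer θ = M.det • g := funext fun i => by
    rw [cramer_transpose_apply, hg i, Pi.smul_apply, smul_eq_mul]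
  have := congrFun (mulVec_cramer Mᵀ θ) j
  rwa [hcr, mulVec_smul, det_transpose, mulVec_transpose] at this

end Matrix

namespace MvPolynomial

variable {σ R K : Type*}

theorem IsHomogeneous.det [CommRing R] {ι : Type*} [Fintype ι] [DecidableEq ι]
    {N : Matrix ι ι (MvPolynomial σ R)} {e : ι → ℕ}
    (h : ∀ i j, (N i j).IsHomogeneous (e i)) :
    N.det.IsHomogeneous (∑ i, e i) := by
  rw [Matrix.det_apply]
  refine IsHomogeneous.sum _ _ _ fun p _ => ?_
  have hp : (∏ i, N (p i) i).IsHomogeneous (∑ i, e i) :=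
    Equiv.sum_comp p e ▸ IsHomogeneous.prod _ _ _ fun i _ => h (p i) i
  rcases Int.units_eq_one_or (Equiv.Perm.sign p) with hs | hs <;> rw [hs]
  · simpa using hp
  · simpa using hp.neg

theorem eq_C_mul_of_dvd_of_totalDegree_le [CommRing R] [IsDomain R] {p q : MvPolynomial σ R}
    (hq : q ≠ 0) (hpq : p ∣ q) (h : q.totalDegree ≤ p.totalDegree) : ∃ c, q = C c * p := by
  obtain ⟨g, rfl⟩ := hpq
  have hg : g ≠ 0 := right_ne_zero_of_mul hq
  rw [totalDegree_mul_of_isDomain (left_ne_zero_of_mul hq) hg] at h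
  exact ⟨g.coeff 0, by rw [mul_comm, ← totalDegree_eq_zero_iff_eq_C.1 (by omega)]⟩

variable [Field K]

theorem irreducible_of_isHomogeneous_one {p : MvPolynomial σ K} (hp : p.IsHomogeneous 1)
    (h0 : p ≠ 0) : Irreducible p := by
  refine irreducible_of_totalDegree_eq_one (hp.totalDegree h0) fun x hx => ?_
  obtain ⟨d, hd⟩ := ne_zero_iff.1 h0
  exact Ne.isUnit fun hx0 => hd (zero_dvd_iff.1 (hx0 ▸ hx d))

/-- Euler's identity `∑ x_j ∂_j p = p` rules out that all the (constant) partials vanish. -/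
theorem exists_isUnit_pderiv [Fintype σ] {p : MvPolynomial σ K} (hp : p.IsHomogeneous 1)
    (h0 : p ≠ 0) : ∃ j, IsUnit (pderiv j p) := by
  by_contra! hnu
  have hzero : ∀ j, pderiv j p = 0 := fun j => by
    have hj := totalDegree_eq_zero_iff_eq_C.1
      ((totalDegree_zero_iff_isHomogeneous _).2 (hp.pderiv (i := j)))
    rw [hj, map_eq_zero_iff _ (C_injective σ K)]
    by_contra hc
    exact hnu j (hj ▸ (Ne.isUnit hc).map C)
  have := hp.sum_X_mul_pderiv
  simp only [hzero, mul_zero, Finset.sum_const_zero, one_smul] at this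
  exact h0 this.symm

end MvPolynomial

section Saito

variable {R K : Type*} {l n : ℕ}

theorem mem_logDer_iff [CommRing R] {α : Fin n → MvPolynomial (Fin l) R} {m : Fin n → ℕ}
    {θ : Fin l → MvPolynomial (Fin l) R} :
    θ ∈ logDer α m ↔ ∀ k, α k ^ m k ∣ derApp (α k) θ := by
  simp only [logDer, Submodule.mem_iInf, Submodule.mem_comap, Ideal.mem_span_singleton]

variable [Field K]

theorem pow_dvd_det_of_dvd_derApp {a : MvPolynomial (Fin l) K} (ha : a.IsHomogeneous 1)
    (h0 : a ≠ 0) {k : ℕ} (N : Matrix (Fin l) (Fin l) (MvPolynomial (Fin l) K))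
    (hN : ∀ i, a ^ k ∣ derApp a (N i)) : a ^ k ∣ N.det := by
  obtain ⟨j, hj⟩ := MvPolynomial.exists_isUnit_pderiv ha h0
  exact N.dvd_det_of_dvd_mulVec (v := fun j => pderiv j a) hj hN

variable {α : Fin n → MvPolynomial (Fin l) K}

theorem pairwise_isRelPrime_pow (hhom : ∀ i, (α i).IsHomogeneous 1) (hnz : ∀ i, α i ≠ 0)
    (hprop : ∀ i j, i ≠ j → ∀ c : K, α j ≠ C c * α i) (m : Fin n → ℕ) :
    Pairwise fun i j => IsRelPrime (α i ^ m i) (α j ^ m j) := by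
  intro i j hij
  refine IsRelPrime.pow_left (IsRelPrime.pow_right ?_)
  refine (irreducible_of_isHomogeneous_one (hhom i) (hnz i)).isRelPrime_iff_not_dvd.2
    fun hdvd => ?_
  obtain ⟨c, hc⟩ := eq_C_mul_of_dvd_of_totalDegree_le (hnz j) hdvd
    (by rw [(hhom i).totalDegree (hnz i), (hhom j).totalDegree (hnz j)])
  exact hprop i j hij c hc

theorem prod_pow_dvd_det (hhom : ∀ i, (α i).IsHomogeneous 1) (hnz : ∀ i, α i ≠ 0)
    (hprop : ∀ i j, i ≠ j → ∀ c : K, α j ≠ C c * α i) {m : Fin n → ℕ}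
    (N : Matrix (Fin l) (Fin l) (MvPolynomial (Fin l) K)) (hN : ∀ i, N i ∈ logDer α m) :
    ∏ k, α k ^ m k ∣ N.det :=
  Fintype.prod_dvd_of_isRelPrime (pairwise_isRelPrime_pow hhom hnz hprop m) fun k =>
    pow_dvd_det_of_dvd_derApp (hhom k) (hnz k) N fun i => mem_logDer_iff.1 (hN i) k

end Saito

theorem saito_pdeg_general {K : Type*} [Field K] {l n : ℕ}
    (α : Fin n → MvPolynomial (Fin l) K) (m : Fin n → ℕ)
    (hhom : ∀ i, (α i).IsHomogeneous 1) (hnz : ∀ i, α i ≠ 0)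
    (hprop : ∀ i j, i ≠ j → ∀ c : K, α j ≠ MvPolynomial.C c * α i)
    (δ : Fin l → (Fin l → MvPolynomial (Fin l) K))
    (hδ : ∀ i, δ i ∈ logDer α m)
    (e : Fin l → ℕ) (hδhom : ∀ i j, (δ i j).IsHomogeneous (e i))
    (hli : LinearIndependent (MvPolynomial (Fin l) K) δ)
    (hsum : ∑ i, e i = ∑ i, m i) :
    ∃ b : Module.Basis (Fin l) (MvPolynomial (Fin l) K) (logDer α m),
      ∀ i, (b i : Fin l → MvPolynomial (Fin l) K) = δ i := by
  classical
  set M : Matrix (Fin l) (Fin l) (MvPolynomial (Fin l) K) := Matrix.of δ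
  have hdet : M.det ≠ 0 := Matrix.det_ne_zero_of_linearIndependent_rows hli
  have hQ : (∏ k, α k ^ m k).IsHomogeneous (∑ k, m k) :=
    IsHomogeneous.prod _ _ _ fun k _ => by simpa using (hhom k).pow (m k)
  obtain ⟨c, hc⟩ := eq_C_mul_of_dvd_of_totalDegree_le hdet
    (prod_pow_dvd_det hhom hnz hprop M hδ)
    (by rw [(IsHomogeneous.det (N := M) hδhom).totalDegree hdet, hQ.totalDegree
      (Finset.prod_ne_zero_iff.2 fun k _ => pow_ne_zero _ (hnz k)), hsum])
  have hunit : IsUnit (C c : MvPolynomial (Fin l) K) :=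
    (Ne.isUnit fun h => hdet (by rw [hc, h, map_zero, zero_mul])).map C
  have hspan : logDer α m ≤ Submodule.span _ (Set.range δ) := fun θ hθ => by
    obtain ⟨g, rfl⟩ := M.exists_vecMul_eq_of_dvd_det_updateRow hdet θ fun i => by
      rw [hc, hunit.mul_left_dvd]
      refine prod_pow_dvd_det hhom hnz hprop _ fun i' => ?_
      rcases eq_or_ne i' i with rfl | hne
      · simpa using hθ
      · rw [Matrix.updateRow_ne hne]; exact hδ i'
    rw [Matrix.vecMul_eq_sum]
    exact Submodule.sum_mem _ fun i _ => Submodule.smul_mem _ _ (Submodule.subset_span ⟨i, rfl⟩)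
  have hP : Submodule.span _ (Set.range δ) = logDer α m :=
    le_antisymm (Submodule.span_le.2 (Set.range_subset_iff.2 hδ)) hspan
  exact ⟨(Module.Basis.span hli).map (LinearEquiv.ofEq _ _ hP), fun i => by
    simp [Module.Basis.span_apply]⟩

/-- Saito's criterion, (3) ⇒ (1): if δ₁,…,δ_l ∈ D(𝒜,m) are homogeneous, linearly
independent over S and ∑ pdeg(δ_i) = |m|, then they form a basis of D(𝒜,m). -/
theorem saito_pdeg {K : Type*} [Field K] {l n : ℕ}
    (α : Fin n → MvPolynomial (Fin l) K) (m : Fin n → ℕ)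
    (hhom : ∀ i, (α i).IsHomogeneous 1) (hnz : ∀ i, α i ≠ 0)
    (hprop : ∀ i j, i ≠ j → ∀ c : K, α j ≠ MvPolynomial.C c * α i)
    (δ : Fin l → (Fin l → MvPolynomial (Fin l) K))
    (hδ : ∀ i, δ i ∈ logDer α m)
    (e : Fin l → ℕ) (hδhom : ∀ i j, (δ i j).IsHomogeneous (e i)) (hδnz : ∀ i, δ i ≠ 0)
    (hli : LinearIndependent (MvPolynomial (Fin l) K) δ)
    (hsum : ∑ i, e i = ∑ i, m i) :
    ∃ b : Module.Basis (Fin l) (MvPolynomial (Fin l) K) (logDer α m),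
      ∀ i, (b i : Fin l → MvPolynomial (Fin l) K) = δ i :=
  saito_pdeg_general α m hhom hnz hprop δ hδ e hδhom hli hsum
end

section
/- Let (𝒜,m) be a multiarrangement in ℚ^l with integer defining forms and p a good prime for (𝒜,m). If p is not a zero divisor on the cokernel of φ_ℤ, then the reduction map π_p^l: Ker(φ_ℤ) → D(𝒜_p, m) is surjective. -/
/-!
Lift `d ∈ D(𝒜_p, m)` coefficientwise to `d̃ ∈ ℤ[x]^l`. Reducing mod `p` commutes with the
Jacobian, so `φ_ℤ(d̃)` vanishes mod `p`, i.e. `φ_ℤ(d̃) = p • y`. Then `p` kills the class of `y` in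
`coker φ_ℤ`; as `p` is a nonzerodivisor there, `y = φ_ℤ(h)`, and `d̃ - p • h` is a lift of `d`
lying in `Ker φ_ℤ`.
-/

open MvPolynomial

variable {l n : ℕ}

section Cokernel

variable {R M N : Type*} [CommRing R] [AddCommGroup M] [Module R M] [AddCommGroup N] [Module R N]

theorem LinearMap.exists_sub_smul_mem_ker_of_smul_injective_cokernel (φ : M →ₗ[R] N) {c : R}
    (hc : ∀ v : N ⧸ LinearMap.range φ, c • v = 0 → v = 0) {x : M} {y : N}
    (hxy : φ x = c • y) : ∃ h : M, x - c • h ∈ LinearMap.ker φ := by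
  have hy : (Submodule.Quotient.mk y : N ⧸ LinearMap.range φ) = 0 := by
    apply hc
    rw [← Submodule.Quotient.mk_smul, ← hxy, Submodule.Quotient.mk_eq_zero]
    exact LinearMap.mem_range_self φ x
  obtain ⟨h, rfl⟩ := (Submodule.Quotient.mk_eq_zero _).mp hy
  exact ⟨h, by rw [LinearMap.mem_ker, map_sub, map_smul, hxy, sub_self]⟩

end Cokernel

section Reduction

variable {R S : Type*} [CommRing R] [CommRing S]

theorem map_derApp (f : R →+* S) (a : MvPolynomial (Fin l) R)
    (v : Fin l → MvPolynomial (Fin l) R) :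
    map f (derApp a v) = derApp (map f a) (fun j => map f (v j)) := by
  simp only [derApp, LinearMap.coe_mk, AddHom.coe_mk, map_sum, map_mul, pderiv_map]

theorem C_dvd_of_map_eq_zero {f : R →+* S} {c : R} (hker : RingHom.ker f = Ideal.span {c})
    {q : MvPolynomial (Fin l) R} (hq : map f q = 0) : C c ∣ q := by
  have hq' : q ∈ RingHom.ker (map f) := hq
  rwa [ker_map, hker, Ideal.map_span, Set.image_singleton, Ideal.mem_span_singleton] at hq'

theorem exists_lift_phiMap_eq_smul {f : R →+* S} (hf : Function.Surjective f) {c : R}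
    (hker : RingHom.ker f = Ideal.span {c}) (α : Fin n → MvPolynomial (Fin l) R) (m : Fin n → ℕ)
    {d : Fin l → MvPolynomial (Fin l) S} (hd : d ∈ logDer (fun i => map f (α i)) m) :
    ∃ dt : Fin l → MvPolynomial (Fin l) R, (fun j => map f (dt j)) = d ∧
      ∃ y, phiMap α m dt = (C c : MvPolynomial (Fin l) R) • y := by
  have hsurj : Function.Surjective (map f : MvPolynomial (Fin l) R →+* _) := map_surjective f hf
  choose dt hdt using fun j => hsurj (d j)
  simp only [logDer, Submodule.mem_iInf, Submodule.mem_comap, Ideal.mem_span_singleton'] at hd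
  choose e he using hd
  choose et het using fun i => hsurj (e i)
  have hdiv : ∀ i, C c ∣ derApp (α i) dt - et i * α i ^ m i := fun i =>
    C_dvd_of_map_eq_zero hker (by
      rw [map_sub, map_derApp, map_mul, map_pow, het, he, funext hdt, sub_self])
  choose r hr using hdiv
  refine ⟨dt, funext hdt, (Mmod α m).mkQ r, ?_⟩
  have hu : ∑ i, et i • Pi.single i (α i ^ m i) ∈ Mmod α m :=
    Submodule.sum_mem _ fun i _ => Submodule.smul_mem _ _ (Submodule.subset_span ⟨i, rfl⟩)
  have hjac : jacMap α dt =
      ∑ i, et i • Pi.single i (α i ^ m i) + (C c : MvPolynomial (Fin l) R) • r := by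
    funext i
    have hi := hr i
    simp only [Pi.add_apply, Finset.sum_apply, Pi.smul_apply, smul_eq_mul, Pi.single_apply,
      mul_ite, mul_zero, Finset.sum_ite_eq, Finset.mem_univ, if_true]
    change derApp (α i) dt = _
    linear_combination hi
  rw [phiMap, LinearMap.comp_apply, hjac, map_add, map_smul, Submodule.mkQ_apply,
    (Submodule.Quotient.mk_eq_zero _).mpr hu, zero_add]

end Reduction

theorem surjective_of_not_zero_divisor_general {l n : ℕ}
    (α : Fin n → MvPolynomial (Fin l) ℤ) (m : Fin n → ℕ)
    (p : ℕ)
    (hnzd : ∀ v : ((Fin n → MvPolynomial (Fin l) ℤ) ⧸ Mmod α m) ⧸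
        LinearMap.range (phiMap α m),
      (p : MvPolynomial (Fin l) ℤ) • v = 0 → v = 0) :
    ∀ d ∈ logDer (fun i => MvPolynomial.map (Int.castRingHom (ZMod p)) (α i)) m,
      ∃ g ∈ LinearMap.ker (phiMap α m),
        (fun j => MvPolynomial.map (Int.castRingHom (ZMod p)) (g j)) = d := by
  intro d hd
  obtain ⟨dt, hdt, y, hy⟩ :=
    exists_lift_phiMap_eq_smul ZMod.intCast_surjective (ZMod.ker_intCastRingHom p) α m hd
  rw [map_natCast] at hy
  obtain ⟨h, hh⟩ := (phiMap α m).exists_sub_smul_mem_ker_of_smul_injective_cokernel hnzd hy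
  refine ⟨dt - (p : MvPolynomial (Fin l) ℤ) • h, hh, ?_⟩
  rw [← hdt]
  funext j
  simp only [Pi.sub_apply, Pi.smul_apply, smul_eq_mul, map_sub, map_mul, map_natCast,
    CharP.cast_eq_zero, zero_mul, sub_zero]

/-- If the good prime p is not a zero divisor on coker(φ_ℤ), then the reduction map
Ker(φ_ℤ) → D(𝒜_p,m) is surjective. -/
theorem surjective_of_not_zero_divisor {l n : ℕ}
    (α : Fin n → MvPolynomial (Fin l) ℤ) (m : Fin n → ℕ)
    (hhom : ∀ i, (α i).IsHomogeneous 1) (hnz : ∀ i, α i ≠ 0)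
    (hprim : ∀ i (q : ℕ), q.Prime → ¬ (MvPolynomial.C (q : ℤ) ∣ α i))
    (p : ℕ) (hp : p.Prime)
    (hgood : ∀ i j, i ≠ j → MvPolynomial.map (Int.castRingHom (ZMod p)) (α i) ≠
      MvPolynomial.map (Int.castRingHom (ZMod p)) (α j))
    (hnzd : ∀ v : ((Fin n → MvPolynomial (Fin l) ℤ) ⧸ Mmod α m) ⧸
        LinearMap.range (phiMap α m),
      (p : MvPolynomial (Fin l) ℤ) • v = 0 → v = 0) :
    ∀ d ∈ logDer (fun i => MvPolynomial.map (Int.castRingHom (ZMod p)) (α i)) m,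
      ∃ g ∈ LinearMap.ker (phiMap α m),
        (fun j => MvPolynomial.map (Int.castRingHom (ZMod p)) (g j)) = d :=
  surjective_of_not_zero_divisor_general α m p hnzd
end
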